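/- Let x₁, x₂ ∈ S_n and d₁, d₂ > 0 be such that S(x₁,d₁) ∩ S(x₂,d₂) ≠ ∅. Then S(x₁,d₁) ∩ S(x₂,d₂) = S(x₃,d₃), where d₃ = (1 + ∑_{i=1}^n min{d₁ − x₁(i), d₂ − x₂(i)})/n and x₃(i) = max{x₁(i) − d₁, x₂(i) − d₂} + d₃ for each i ∈ [n]. -/

import Mathlib

open InnerProductSpace Finset

noncomputable section

abbrev Euc (n : ℕ) := EuclideanSpace ℝ (Fin n)

/-- The all-ones vector. -/
def ones (n : ℕ) : Euc n := WithLp.toLp 2 fun _ => 1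

/-- The unit simplex. -/
def unitSimplex (n : ℕ) : Set (Euc n) := {x | (∀ i, 0 ≤ x i) ∧ ∑ i, x i = 1}

/-- The simplex ball. -/
def simplexBall (n : ℕ) (x : Euc n) (d : ℝ) : Set (Euc n) :=
  {y | ∃ l ∈ unitSimplex n, y = (x - d • ones n) + ((n : ℝ) * d) • l}

/-!
For `d ≥ 0` the simplex ball `S(x, d)` is the set of `y` with `y ≥ x - d • 𝟙` coordinatewise and
`∑ y = ∑ x`. Over the unit simplex, the intersection of two such sets is therefore cut out by the
coordinatewise maximum of the two lower corners, which is again a simplex ball whose radius is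
fixed by `∑ y = 1`; the radius is nonnegative exactly because the intersection is nonempty.
-/

lemma pos_of_mem_unitSimplex {n : ℕ} {x : Euc n} (hx : x ∈ unitSimplex n) : 0 < n :=
  Nat.pos_of_ne_zero fun hn => by subst hn; simpa using hx.2

lemma uniform_mem_unitSimplex {n : ℕ} (hn : 0 < n) :
    (WithLp.toLp 2 fun _ => (n : ℝ)⁻¹ : Euc n) ∈ unitSimplex n :=
  ⟨fun _ => by positivity, by simp [hn.ne']⟩

lemma simplexBall_point_apply (n : ℕ) (x l : Euc n) (d : ℝ) (i : Fin n) :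
    ((x - d • ones n) + ((n : ℝ) * d) • l) i = x i - d + n * d * l i := by
  simp [ones]

lemma mem_simplexBall_iff {n : ℕ} (hn : 0 < n) {x : Euc n} {d : ℝ} (hd : 0 ≤ d) {y : Euc n} :
    y ∈ simplexBall n x d ↔ (∀ i, x i - d ≤ y i) ∧ ∑ i, y i = ∑ i, x i := by
  constructor
  · rintro ⟨l, ⟨hl_nonneg, hl_sum⟩, rfl⟩
    simp only [simplexBall_point_apply]
    refine ⟨fun i => le_add_of_nonneg_right (by have := hl_nonneg i; positivity), ?_⟩
    simp [sum_add_distrib, ← mul_sum, hl_sum]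
  · rintro ⟨hlow, hsum⟩
    rcases hd.eq_or_lt with rfl | hd
    · -- for `d = 0` the ball is `{x}`, and any `λ` works
      have hyx : ∀ i, y i = x i := fun i =>
        ((sum_eq_sum_iff_of_le fun i _ => by simpa using hlow i).1 hsum.symm i (mem_univ i)).symm
      exact ⟨_, uniform_mem_unitSimplex hn, by ext i; simp [hyx]⟩
    · -- `λ` is recovered from `y` as `(y - x + d) / (n d)`.
      have hnd : (n : ℝ) * d ≠ 0 := by positivity
      refine ⟨WithLp.toLp 2 fun i => (y i - x i + d) / (n * d),
        ⟨fun i => div_nonneg (by linarith [hlow i]) (by positivity), ?_⟩, ?_⟩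
      · simp [← sum_div, sum_add_distrib, sum_sub_distrib, hsum, hnd]
      · ext i
        rw [simplexBall_point_apply]
        field_simp
        ring

theorem simplexBall_inter_simplexBall (n : ℕ) (x₁ x₂ : Euc n)
    (hx₁ : x₁ ∈ unitSimplex n) (hx₂ : x₂ ∈ unitSimplex n)
    (d₁ d₂ : ℝ) (hd₁ : 0 < d₁) (hd₂ : 0 < d₂)
    (hne : (simplexBall n x₁ d₁ ∩ simplexBall n x₂ d₂).Nonempty) :
    simplexBall n x₁ d₁ ∩ simplexBall n x₂ d₂ =
      simplexBall n
        (WithLp.toLp 2 fun i => max (x₁ i - d₁) (x₂ i - d₂) +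
          (1 + ∑ j, min (d₁ - x₁ j) (d₂ - x₂ j)) / n)
        ((1 + ∑ j, min (d₁ - x₁ j) (d₂ - x₂ j)) / n) := by
  have hn := pos_of_mem_unitSimplex hx₁
  set s := ∑ j, min (d₁ - x₁ j) (d₂ - x₂ j)
  have hcorner_sum : ∑ i, max (x₁ i - d₁) (x₂ i - d₂) = -s := by
    simp only [s, ← sum_neg_distrib, ← max_neg_neg, neg_sub]
  have hcenter_sum : ∑ i, (max (x₁ i - d₁) (x₂ i - d₂) + (1 + s) / n) = 1 := by
    have : (n : ℝ) ≠ 0 := by positivity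
    simp [sum_add_distrib, hcorner_sum, mul_div_cancel₀ _ this]
  have hd₃ : 0 ≤ (1 + s) / n := by
    obtain ⟨y, hy₁, hy₂⟩ := hne
    rw [mem_simplexBall_iff hn hd₁.le] at hy₁
    rw [mem_simplexBall_iff hn hd₂.le] at hy₂
    have : ∑ i, max (x₁ i - d₁) (x₂ i - d₂) ≤ ∑ i, y i :=
      sum_le_sum fun i _ => max_le (hy₁.1 i) (hy₂.1 i)
    rw [hcorner_sum, hy₁.2, hx₁.2] at this
    exact div_nonneg (by linarith) n.cast_nonneg
  ext y
  simp only [Set.mem_inter_iff, mem_simplexBall_iff hn hd₁.le, mem_simplexBall_iff hn hd₂.le,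
    mem_simplexBall_iff hn hd₃, add_sub_cancel_right, max_le_iff, forall_and,
    hx₁.2, hx₂.2, hcenter_sum]
  tauto
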